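/- Let S ↪ G ↠ H be a groupoid extension, let T be a bundle of abelian groups over the unit space endowed with an H-action, and let φ : S → T be an equivariant group bundle morphism (φ(γ s γ⁻¹) = π(γ)·φ(s) for all composable (γ, s) ∈ G * S). Define T * G = {(t, γ) : p_T(t) = r(γ)} with multiplication (t,γ)(t',γ') = (t·(π(γ)·t'), γγ') and inverse (t,γ)⁻¹ = (π(γ)⁻¹·t⁻¹, γ⁻¹). Then T * G is a groupoid and the map i : S → T * G given by i(s) = (φ(s⁻¹), s) is an injective groupoid homomorphism whose image is a normal subgroupoid of T * G. -/

import Mathlib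

/-- An (algebraic) groupoid with unit space `X` and arrow space `A`.
The multiplication is total, but the axioms only constrain it on
composable pairs, i.e. pairs `(a, b)` with `src a = rng b`
(so `mul a b` corresponds to the product `a b` in the paper,
with `s (a b) = s b` and `r (a b) = r a`). -/
structure Gpd (X : Type*) (A : Type*) where
  src : A → X
  rng : A → X
  mul : A → A → A
  inv : A → A
  unit : X → A
  src_unit : ∀ x, src (unit x) = x
  rng_unit : ∀ x, rng (unit x) = x
  src_mul : ∀ a b, src a = rng b → src (mul a b) = src b
  rng_mul : ∀ a b, src a = rng b → rng (mul a b) = rng a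
  mul_assoc : ∀ a b c, src a = rng b → src b = rng c →
    mul (mul a b) c = mul a (mul b c)
  unit_mul : ∀ a, mul (unit (rng a)) a = a
  mul_unit : ∀ a, mul a (unit (src a)) = a
  src_inv : ∀ a, src (inv a) = rng a
  rng_inv : ∀ a, rng (inv a) = src a
  mul_inv : ∀ a, mul a (inv a) = unit (rng a)
  inv_mul : ∀ a, mul (inv a) a = unit (src a)

/-- A bundle of abelian groups over `X`, with total space `T` and bundle map
`p`.  The (total) operations are only constrained fibrewise. -/
structure GrpBundle (X : Type*) (T : Type*) where
  p : T → X
  mul : T → T → T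
  one : X → T
  inv : T → T
  p_one : ∀ x, p (one x) = x
  p_mul : ∀ s t, p s = p t → p (mul s t) = p s
  p_inv : ∀ t, p (inv t) = p t
  mul_assoc : ∀ s t u, p s = p t → p t = p u →
    mul (mul s t) u = mul s (mul t u)
  mul_comm : ∀ s t, p s = p t → mul s t = mul t s
  one_mul : ∀ t, mul (one (p t)) t = t
  mul_inv : ∀ t, mul t (inv t) = one (p t)

/-- An action of the groupoid `H` on the group bundle `Tb` by group bundle
automorphisms covering the action of `H` on its units: an arrow `b` maps the
fibre over `src b` to the fibre over `rng b`. -/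
structure GpdAction {X B T : Type*} (H : Gpd X B) (Tb : GrpBundle X T) where
  act : B → T → T
  p_act : ∀ b t, Tb.p t = H.src b → Tb.p (act b t) = H.rng b
  act_unit : ∀ t, act (H.unit (Tb.p t)) t = t
  act_comp : ∀ b b' t, H.src b = H.rng b' → Tb.p t = H.src b' →
    act (H.mul b b') t = act b (act b' t)
  act_mul : ∀ b s t, Tb.p s = Tb.p t → Tb.p s = H.src b →
    act b (Tb.mul s t) = Tb.mul (act b s) (act b t)
  act_one : ∀ b, act b (Tb.one (H.src b)) = Tb.one (H.rng b)

/-!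
Since `H` acts on `T` by automorphisms covering its action on units, the twisted product
on `T * G` is associative and has the evident units and inverses, exactly as for a
semidirect product of groups. An arrow `s` of the kernel `S` maps to a unit of `H`, hence
acts trivially on `T`; together with commutativity of `T` this makes `i` multiplicative and
inverse-preserving. Conjugating `i s` by `(t, γ)` gives
`(t · (π γ · φ (s⁻¹)) · t⁻¹, γ s γ⁻¹)`; the `t`'s cancel because `T` is abelian, and
equivariance identifies `π γ · φ (s⁻¹)` with `φ ((γ s γ⁻¹)⁻¹)`.
-/

namespace Gpd

variable {X A B : Type*} (G : Gpd X A)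

theorem eq_inv_of_mul_eq_unit {c a : A} (h₁ : G.src c = G.rng a)
    (h₂ : G.mul c a = G.unit (G.src a)) : c = G.inv a :=
  calc c = G.mul c (G.unit (G.src c)) := (G.mul_unit c).symm
    _ = G.mul c (G.mul a (G.inv a)) := by rw [h₁, G.mul_inv]
    _ = G.mul (G.mul c a) (G.inv a) := (G.mul_assoc c a _ h₁ (G.rng_inv a).symm).symm
    _ = G.inv a := by rw [h₂, ← G.rng_inv a, G.unit_mul]

theorem inv_inv (a : A) : G.inv (G.inv a) = a :=
  (G.eq_inv_of_mul_eq_unit (G.rng_inv a).symm (by rw [G.src_inv, G.mul_inv])).symm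

theorem unit_mul_unit (x : X) : G.mul (G.unit x) (G.unit x) = G.unit x := by
  simpa only [G.rng_unit] using G.unit_mul (G.unit x)

theorem inv_unit (x : X) : G.inv (G.unit x) = G.unit x :=
  (G.eq_inv_of_mul_eq_unit (by rw [G.src_unit, G.rng_unit])
    (by rw [G.src_unit, G.unit_mul_unit])).symm

theorem inv_mul_cancel_left {a b : A} (h : G.src a = G.rng b) :
    G.mul (G.inv a) (G.mul a b) = b := by
  rw [← G.mul_assoc _ _ _ (G.src_inv a) h, G.inv_mul, h, G.unit_mul]

theorem mul_inv_rev {a b : A} (h : G.src a = G.rng b) :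
    G.inv (G.mul a b) = G.mul (G.inv b) (G.inv a) := by
  have hba : G.src (G.inv b) = G.rng (G.inv a) := by rw [G.src_inv, G.rng_inv, h]
  refine (G.eq_inv_of_mul_eq_unit ?_ ?_).symm
  · rw [G.src_mul _ _ hba, G.src_inv, G.rng_mul _ _ h]
  · rw [G.mul_assoc _ _ _ hba (by rw [G.src_inv, G.rng_mul _ _ h]),
      G.inv_mul_cancel_left h, G.inv_mul, G.src_mul _ _ h]

theorem inv_conj {γ s : A} (h₁ : G.src γ = G.rng s) (h₂ : G.src s = G.src γ) :
    G.inv (G.mul (G.mul γ s) (G.inv γ)) = G.mul (G.mul γ (G.inv s)) (G.inv γ) := by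
  have h : G.src (G.mul γ s) = G.rng (G.inv γ) := by rw [G.src_mul _ _ h₁, G.rng_inv, h₂]
  rw [G.mul_inv_rev h, G.inv_inv, G.mul_inv_rev h₁,
    ← G.mul_assoc _ _ _ (by rw [G.rng_inv, h₂]) (by rw [G.src_inv, G.rng_inv, h₁])]

structure Hom (H : Gpd X B) where
  toFun : A → B
  map_src : ∀ a, H.src (toFun a) = G.src a
  map_rng : ∀ a, H.rng (toFun a) = G.rng a
  map_mul : ∀ a b, G.src a = G.rng b → toFun (G.mul a b) = H.mul (toFun a) (toFun b)
  map_unit : ∀ x, toFun (G.unit x) = H.unit x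

namespace Hom

variable {G} {H : Gpd X B}

instance : CoeFun (G.Hom H) fun _ => A → B := ⟨toFun⟩

variable (f : G.Hom H)

theorem map_inv (a : A) : f (G.inv a) = H.inv (f a) :=
  H.eq_inv_of_mul_eq_unit (by rw [f.map_src, G.src_inv, f.map_rng])
    (by rw [← f.map_mul _ _ (G.src_inv a), G.inv_mul, f.map_unit, f.map_src])

def ker : Set A := {a | f a = H.unit (G.src a)}

theorem src_eq_rng_of_mem_ker {a : A} (ha : a ∈ f.ker) : G.src a = G.rng a := by
  rw [← f.map_rng, show f a = _ from ha, H.rng_unit]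

theorem inv_mem_ker {a : A} (ha : a ∈ f.ker) : G.inv a ∈ f.ker := by
  show f (G.inv a) = _
  rw [f.map_inv, show f a = _ from ha, H.inv_unit, G.src_inv, f.src_eq_rng_of_mem_ker ha]

theorem map_mul_of_mem_ker {γ s : A} (hs : s ∈ f.ker) (h : G.src γ = G.rng s) :
    f (G.mul γ s) = f γ := by
  rw [f.map_mul _ _ h, show f s = _ from hs, f.src_eq_rng_of_mem_ker hs, ← h, ← f.map_src,
    H.mul_unit]

theorem mul_mem_ker {a b : A} (ha : a ∈ f.ker) (hb : b ∈ f.ker) (h : G.src a = G.rng b) :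
    G.mul a b ∈ f.ker := by
  show f (G.mul a b) = _
  rw [f.map_mul_of_mem_ker hb h, show f a = _ from ha, G.src_mul _ _ h, h,
    f.src_eq_rng_of_mem_ker hb]

theorem conj_mem_ker {γ s : A} (hs : s ∈ f.ker) (h : G.src γ = G.rng s) :
    G.mul (G.mul γ s) (G.inv γ) ∈ f.ker := by
  have h' : G.src (G.mul γ s) = G.rng (G.inv γ) := by
    rw [G.src_mul _ _ h, G.rng_inv, f.src_eq_rng_of_mem_ker hs, h]
  show f (G.mul (G.mul γ s) (G.inv γ)) = _
  rw [f.map_mul _ _ h', f.map_mul_of_mem_ker hs h, f.map_inv, H.mul_inv, f.map_rng,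
    G.src_mul _ _ h', G.src_inv]

end Hom

end Gpd

namespace GrpBundle

variable {X T : Type*} (Tb : GrpBundle X T)

theorem mul_one (t : T) : Tb.mul t (Tb.one (Tb.p t)) = t := by
  rw [Tb.mul_comm _ _ (Tb.p_one _).symm, Tb.one_mul]

theorem inv_mul (t : T) : Tb.mul (Tb.inv t) t = Tb.one (Tb.p t) := by
  rw [Tb.mul_comm _ _ (Tb.p_inv t), Tb.mul_inv]

theorem eq_inv_of_mul_eq_one {u v : T} (hp : Tb.p u = Tb.p v)
    (h : Tb.mul u v = Tb.one (Tb.p v)) : u = Tb.inv v :=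
  calc u = Tb.mul u (Tb.one (Tb.p u)) := (Tb.mul_one u).symm
    _ = Tb.mul u (Tb.mul v (Tb.inv v)) := by rw [hp, Tb.mul_inv]
    _ = Tb.mul (Tb.mul u v) (Tb.inv v) := (Tb.mul_assoc u v _ hp (Tb.p_inv v).symm).symm
    _ = Tb.inv v := by rw [h, ← Tb.p_inv v, Tb.one_mul]

theorem eq_one_of_mul_self {t : T} (h : Tb.mul t t = t) : t = Tb.one (Tb.p t) :=
  calc t = Tb.mul t (Tb.mul t (Tb.inv t)) := by rw [Tb.mul_inv, Tb.mul_one]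
    _ = Tb.mul (Tb.mul t t) (Tb.inv t) := (Tb.mul_assoc _ _ _ rfl (Tb.p_inv t).symm).symm
    _ = Tb.one (Tb.p t) := by rw [h, Tb.mul_inv]

theorem mul_inv_cancel_comm {s t : T} (hp : Tb.p s = Tb.p t) :
    Tb.mul (Tb.mul s t) (Tb.inv s) = t := by
  rw [Tb.mul_comm _ _ hp, Tb.mul_assoc _ _ _ hp.symm (Tb.p_inv s).symm, Tb.mul_inv, hp,
    Tb.mul_one]

end GrpBundle

namespace GpdAction

variable {X B T : Type*} {H : Gpd X B} {Tb : GrpBundle X T} (ac : GpdAction H Tb)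

theorem act_act_inv {b : B} {t : T} (h : Tb.p t = H.rng b) :
    ac.act b (ac.act (H.inv b) t) = t := by
  rw [← ac.act_comp _ _ _ (H.rng_inv b).symm (by rw [H.src_inv, h]), H.mul_inv, ← h,
    ac.act_unit]

theorem act_mul_act {b b' : B} {t u : T} (hbb' : H.src b = H.rng b')
    (ht : Tb.p t = H.src b) (hu : Tb.p u = H.src b') :
    ac.act b (Tb.mul t (ac.act b' u)) = Tb.mul (ac.act b t) (ac.act (H.mul b b') u) := by
  rw [ac.act_comp _ _ _ hbb' hu]
  exact ac.act_mul _ _ _ (by rw [ac.p_act _ _ hu, ht, hbb']) ht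

theorem act_of_mem_ker {A : Type*} {G : Gpd X A} (f : G.Hom H) {s : A} (hs : s ∈ f.ker)
    {t : T} (ht : Tb.p t = G.src s) : ac.act (f s) t = t := by
  rw [show f s = _ from hs, ← ht, ac.act_unit]

end GpdAction

section Semidirect

variable {X A B T : Type*} {G : Gpd X A} {H : Gpd X B} {Tb : GrpBundle X T}

/-- The fibred product `T * G = {(t, γ) : p_T t = r γ}`. -/
abbrev FibProd (Tb : GrpBundle X T) (G : Gpd X A) : Type _ :=
  {q : T × A // Tb.p q.1 = G.rng q.2}

variable (ac : GpdAction H Tb) (f : G.Hom H)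

namespace FibProd

theorem mul_fibre {q q' : FibProd Tb G} (h : G.src q.1.2 = G.rng q'.1.2) :
    Tb.p (Tb.mul q.1.1 (ac.act (f q.1.2) q'.1.1)) = G.rng (G.mul q.1.2 q'.1.2) := by
  have hq' : Tb.p q'.1.1 = H.src (f q.1.2) := by rw [f.map_src, q'.2, h]
  rw [Tb.p_mul _ _ (by rw [ac.p_act _ _ hq', f.map_rng, q.2]), G.rng_mul _ _ h, q.2]

theorem inv_fibre (q : FibProd Tb G) :
    Tb.p (ac.act (H.inv (f q.1.2)) (Tb.inv q.1.1)) = G.rng (G.inv q.1.2) := by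
  rw [ac.p_act _ _ (by rw [H.src_inv, Tb.p_inv, f.map_rng, q.2]), H.rng_inv, f.map_src,
    G.rng_inv]

open Classical in
/-- Non-composable pairs multiply to the junk value `q`. -/
noncomputable def mul (q q' : FibProd Tb G) : FibProd Tb G :=
  if h : G.src q.1.2 = G.rng q'.1.2 then
    ⟨(Tb.mul q.1.1 (ac.act (f q.1.2) q'.1.1), G.mul q.1.2 q'.1.2), mul_fibre ac f h⟩
  else q

def inv (q : FibProd Tb G) : FibProd Tb G :=
  ⟨(ac.act (H.inv (f q.1.2)) (Tb.inv q.1.1), G.inv q.1.2), inv_fibre ac f q⟩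

theorem mul_val {q q' : FibProd Tb G} (h : G.src q.1.2 = G.rng q'.1.2) :
    (mul ac f q q').1 = (Tb.mul q.1.1 (ac.act (f q.1.2) q'.1.1), G.mul q.1.2 q'.1.2) := by
  rw [mul, dif_pos h]

theorem mul_assoc {a b c : FibProd Tb G} (hab : G.src a.1.2 = G.rng b.1.2)
    (hbc : G.src b.1.2 = G.rng c.1.2) :
    mul ac f (mul ac f a b) c = mul ac f a (mul ac f b c) := by
  have h₁ : G.src (mul ac f a b).1.2 = G.rng c.1.2 := by
    rw [mul_val ac f hab, G.src_mul _ _ hab, hbc]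
  have h₂ : G.src a.1.2 = G.rng (mul ac f b c).1.2 := by
    rw [mul_val ac f hbc, G.rng_mul _ _ hbc, hab]
  apply Subtype.ext
  rw [mul_val ac f h₁, mul_val ac f h₂, mul_val ac f hab, mul_val ac f hbc]
  refine Prod.ext ?_ (G.mul_assoc _ _ _ hab hbc)
  have hb : Tb.p b.1.1 = H.src (f a.1.2) := by rw [f.map_src, b.2, hab]
  have hc : Tb.p c.1.1 = H.src (f b.1.2) := by rw [f.map_src, c.2, hbc]
  have hfab : H.src (f a.1.2) = H.rng (f b.1.2) := by rw [f.map_src, f.map_rng, hab]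
  dsimp only
  rw [ac.act_mul_act hfab hb hc, ← f.map_mul _ _ hab,
    Tb.mul_assoc _ _ _ (by rw [ac.p_act _ _ hb, f.map_rng, a.2])
      (by rw [ac.p_act _ _ hb, ac.p_act _ _ (by rw [f.map_src, G.src_mul _ _ hab, c.2, hbc]),
        f.map_rng, f.map_rng, G.rng_mul _ _ hab])]

end FibProd

/-- The groupoid `T * G`. -/
noncomputable def semidirect : Gpd X (FibProd Tb G) where
  src q := G.src q.1.2
  rng q := G.rng q.1.2
  mul := FibProd.mul ac f
  inv := FibProd.inv ac f
  unit x := ⟨(Tb.one x, G.unit x), by rw [Tb.p_one, G.rng_unit]⟩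
  src_unit := G.src_unit
  rng_unit := G.rng_unit
  src_mul a b h := by simp only [FibProd.mul_val ac f h, G.src_mul _ _ h]
  rng_mul a b h := by simp only [FibProd.mul_val ac f h, G.rng_mul _ _ h]
  mul_assoc _ _ _ := FibProd.mul_assoc ac f
  unit_mul a := by
    refine Subtype.ext ?_
    rw [FibProd.mul_val ac f (G.src_unit _)]
    refine Prod.ext ?_ (G.unit_mul _)
    dsimp only
    rw [f.map_unit, ← a.2, ac.act_unit, Tb.one_mul]
  mul_unit a := by
    refine Subtype.ext ?_
    rw [FibProd.mul_val ac f (G.rng_unit _).symm]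
    refine Prod.ext ?_ (G.mul_unit _)
    dsimp only
    rw [← f.map_src, ac.act_one, f.map_rng, ← a.2, Tb.mul_one]
  src_inv a := G.src_inv a.1.2
  rng_inv a := G.rng_inv a.1.2
  mul_inv a := by
    refine Subtype.ext ?_
    rw [FibProd.mul_val ac f (G.rng_inv _).symm]
    refine Prod.ext ?_ (G.mul_inv _)
    dsimp only [FibProd.inv]
    rw [ac.act_act_inv (by rw [Tb.p_inv, f.map_rng, a.2]), Tb.mul_inv, a.2]
  inv_mul a := by
    refine Subtype.ext ?_
    rw [FibProd.mul_val ac f (G.src_inv _)]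
    refine Prod.ext ?_ (G.inv_mul _)
    dsimp only [FibProd.inv]
    rw [f.map_inv, ← ac.act_mul _ _ _ (Tb.p_inv _)
        (by rw [Tb.p_inv, H.src_inv, f.map_rng, a.2]),
      Tb.inv_mul, a.2, ← f.map_rng, ← H.src_inv, ac.act_one, H.rng_inv, f.map_src]

theorem semidirect_mul_val {q q' : FibProd Tb G} (h : G.src q.1.2 = G.rng q'.1.2) :
    ((semidirect ac f).mul q q').1 =
      (Tb.mul q.1.1 (ac.act (f q.1.2) q'.1.1), G.mul q.1.2 q'.1.2) :=
  FibProd.mul_val ac f h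

end Semidirect

namespace Gpd.Hom

variable {X A B T : Type*} {G : Gpd X A} {H : Gpd X B}

/-- A morphism of group bundles `ker f → Tb`, given by a function on all arrows that is
constrained only on the kernel. -/
structure KerHom (f : G.Hom H) (Tb : GrpBundle X T) where
  toFun : A → T
  p_map : ∀ a ∈ f.ker, Tb.p (toFun a) = G.src a
  map_mul : ∀ a b, a ∈ f.ker → b ∈ f.ker → G.src a = G.src b →
    toFun (G.mul a b) = Tb.mul (toFun a) (toFun b)

namespace KerHom

variable {Tb : GrpBundle X T} {f : G.Hom H}

instance : CoeFun (f.KerHom Tb) fun _ => A → T := ⟨toFun⟩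

variable (φ : f.KerHom Tb)

theorem map_unit (x : X) : φ (G.unit x) = Tb.one x := by
  have hx : G.unit x ∈ f.ker := by
    show f (G.unit x) = _
    rw [f.map_unit, G.src_unit]
  have hp : Tb.p (φ (G.unit x)) = x := by rw [φ.p_map _ hx, G.src_unit]
  have hsq : Tb.mul (φ (G.unit x)) (φ (G.unit x)) = φ (G.unit x) := by
    rw [← φ.map_mul _ _ hx hx rfl, G.unit_mul_unit]
  rw [Tb.eq_one_of_mul_self hsq, hp]

theorem map_inv {s : A} (hs : s ∈ f.ker) : φ (G.inv s) = Tb.inv (φ s) := by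
  have hs' := f.inv_mem_ker hs
  refine Tb.eq_inv_of_mul_eq_one ?_ ?_
  · rw [φ.p_map _ hs', φ.p_map _ hs, G.src_inv, f.src_eq_rng_of_mem_ker hs]
  · rw [← φ.map_mul _ _ hs' hs (by rw [G.src_inv, f.src_eq_rng_of_mem_ker hs]), G.inv_mul,
      φ.map_unit, φ.p_map _ hs]

def incl (s : f.ker) : FibProd Tb G :=
  ⟨(φ (G.inv s), s), by rw [φ.p_map _ (f.inv_mem_ker s.2), G.src_inv]⟩

theorem incl_injective : Function.Injective φ.incl :=
  fun _ _ h => Subtype.ext (congrArg (fun q => q.1.2) h)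

variable (ac : GpdAction H Tb)

theorem incl_mul (s s' : f.ker) (h : G.src s.1 = G.src s'.1) :
    φ.incl ⟨G.mul s s', f.mul_mem_ker s.2 s'.2 (h.trans (f.src_eq_rng_of_mem_ker s'.2))⟩ =
      (semidirect ac f).mul (φ.incl s) (φ.incl s') := by
  have hs := f.inv_mem_ker s.2
  have hs' := f.inv_mem_ker s'.2
  have hcomp : G.src s.1 = G.rng s'.1 := h.trans (f.src_eq_rng_of_mem_ker s'.2)
  have hsrc : G.src (G.inv s'.1) = G.src (G.inv s.1) := by
    rw [G.src_inv, G.src_inv, ← f.src_eq_rng_of_mem_ker s.2, ← f.src_eq_rng_of_mem_ker s'.2, h]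
  refine Subtype.ext ?_
  rw [semidirect_mul_val ac f hcomp]
  refine Prod.ext ?_ rfl
  dsimp only [incl]
  rw [ac.act_of_mem_ker f s.2 (by rw [φ.p_map _ hs', hsrc, G.src_inv,
      f.src_eq_rng_of_mem_ker s.2]),
    G.mul_inv_rev hcomp, φ.map_mul _ _ hs' hs hsrc,
    Tb.mul_comm _ _ (by rw [φ.p_map _ hs', φ.p_map _ hs, hsrc])]

theorem incl_inv (s : f.ker) :
    φ.incl ⟨G.inv s, f.inv_mem_ker s.2⟩ = (semidirect ac f).inv (φ.incl s) := by
  have hs := f.inv_mem_ker s.2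
  refine Subtype.ext (Prod.ext ?_ rfl)
  dsimp only [incl, semidirect, FibProd.inv]
  rw [G.inv_inv, ← f.map_inv, ← φ.map_inv hs,
    ac.act_of_mem_ker f hs (by rw [φ.p_map _ (f.inv_mem_ker hs), G.inv_inv, G.src_inv,
      f.src_eq_rng_of_mem_ker s.2]), G.inv_inv]

def IsEquivariant : Prop :=
  ∀ γ s, s ∈ f.ker → G.rng s = G.src γ →
    φ (G.mul (G.mul γ s) (G.inv γ)) = ac.act (f γ) (φ s)

theorem conj_incl (hφ : φ.IsEquivariant ac) (q : FibProd Tb G) (s : f.ker)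
    (h₁ : G.src s.1 = G.src q.1.2) (h₂ : G.rng s.1 = G.src q.1.2) :
    (semidirect ac f).mul ((semidirect ac f).mul q (φ.incl s)) ((semidirect ac f).inv q) =
      φ.incl ⟨G.mul (G.mul q.1.2 s) (G.inv q.1.2), f.conj_mem_ker s.2 h₂.symm⟩ := by
  have hs := f.inv_mem_ker s.2
  have hqs : G.src (G.mul q.1.2 s) = G.rng (G.inv q.1.2) := by
    rw [G.src_mul _ _ h₂.symm, G.rng_inv, h₁]
  have hφs : Tb.p (φ (G.inv s)) = H.src (f q.1.2) := by
    rw [f.map_src, φ.p_map _ hs, G.src_inv, h₂]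
  have hqs' : G.src ((semidirect ac f).mul q (φ.incl s)).1.2 =
      G.rng ((semidirect ac f).inv q).1.2 := by
    rw [semidirect_mul_val ac f h₂.symm]
    exact hqs
  refine Subtype.ext ?_
  rw [semidirect_mul_val ac f hqs', semidirect_mul_val ac f h₂.symm]
  refine Prod.ext ?_ rfl
  dsimp only [incl, semidirect, FibProd.inv]
  rw [f.map_mul_of_mem_ker s.2 h₂.symm,
    ac.act_act_inv (by rw [Tb.p_inv, f.map_rng, q.2]),
    Tb.mul_inv_cancel_comm (by rw [ac.p_act _ _ hφs, f.map_rng, q.2]),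
    G.inv_conj h₂.symm h₁, hφ _ _ hs (by rw [G.rng_inv, h₁])]

end KerHom

end Gpd.Hom

theorem stmt2_general {X A B T : Type*} (G : Gpd X A) (H : Gpd X B)
    (Tb : GrpBundle X T) (ac : GpdAction H Tb)
    (π : A → B)
    (hsrc : ∀ a, H.src (π a) = G.src a)
    (hrng : ∀ a, H.rng (π a) = G.rng a)
    (hmulπ : ∀ a b, G.src a = G.rng b → π (G.mul a b) = H.mul (π a) (π b))
    (hunitπ : ∀ x, π (G.unit x) = H.unit x)
    (S : Set A) (hker : S = {a | π a = H.unit (G.src a)})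
    (φ : A → T)
    (hφp : ∀ a ∈ S, Tb.p (φ a) = G.src a)
    (hφmul : ∀ a b, a ∈ S → b ∈ S → G.src a = G.src b →
      φ (G.mul a b) = Tb.mul (φ a) (φ b))
    (hφequiv : ∀ γ s, s ∈ S → G.rng s = G.src γ →
      φ (G.mul (G.mul γ s) (G.inv γ)) = ac.act (π γ) (φ s)) :
    ∃ (TG : Gpd X {q : T × A // Tb.p q.1 = G.rng q.2})
      (i : {a : A // a ∈ S} → {q : T × A // Tb.p q.1 = G.rng q.2}),
      (∀ q, TG.src q = G.src q.val.2) ∧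
      (∀ q, TG.rng q = G.rng q.val.2) ∧
      (∀ x, (TG.unit x).val = (Tb.one x, G.unit x)) ∧
      (∀ q q', G.src q.val.2 = G.rng q'.val.2 →
        (TG.mul q q').val =
          (Tb.mul q.val.1 (ac.act (π q.val.2) q'.val.1),
            G.mul q.val.2 q'.val.2)) ∧
      (∀ q, (TG.inv q).val =
          (ac.act (H.inv (π q.val.2)) (Tb.inv q.val.1), G.inv q.val.2)) ∧
      (∀ s, (i s).val = (φ (G.inv s.val), s.val)) ∧
      Function.Injective i ∧
      (∀ s s', G.src s.val = G.src s'.val →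
        ∃ s'' : {a : A // a ∈ S}, s''.val = G.mul s.val s'.val ∧
          i s'' = TG.mul (i s) (i s')) ∧
      (∀ s, ∃ s' : {a : A // a ∈ S}, s'.val = G.inv s.val ∧
        i s' = TG.inv (i s)) ∧
      (∀ q w, (∃ s, i s = w) → TG.src w = TG.src q → TG.rng w = TG.src q →
        ∃ s', i s' = TG.mul (TG.mul q w) (TG.inv q)) := by
  subst hker
  let f : G.Hom H := ⟨π, hsrc, hrng, hmulπ, hunitπ⟩
  let ψ : f.KerHom Tb := ⟨φ, hφp, hφmul⟩
  refine ⟨semidirect ac f, ψ.incl, fun _ => rfl, fun _ => rfl, fun _ => rfl,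
    fun _ _ h => semidirect_mul_val ac f h, fun _ => rfl, fun _ => rfl, ψ.incl_injective,
    fun s s' h => ⟨_, rfl, ψ.incl_mul ac s s' h⟩, fun s => ⟨_, rfl, ψ.incl_inv ac s⟩,
    ?_⟩
  rintro q _ ⟨s, rfl⟩ h₁ h₂
  exact ⟨_, (ψ.conj_incl ac hφequiv q s h₁ h₂).symm⟩

/-- `T * G = {(t, γ) : p_T t = r γ}`, with multiplication
`(t,γ)(t',γ') = (t·(π(γ)·t'), γγ')` and inverse
`(t,γ)⁻¹ = (π(γ)⁻¹·t⁻¹, γ⁻¹)`, is a groupoid, and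
`i : S → T * G`, `i s = (φ(s⁻¹), s)`, is an injective groupoid
homomorphism whose image is a normal subgroupoid of `T * G`. -/
theorem stmt2 {X A B T : Type*} (G : Gpd X A) (H : Gpd X B)
    (Tb : GrpBundle X T) (ac : GpdAction H Tb)
    (π : A → B)
    (hsrc : ∀ a, H.src (π a) = G.src a)
    (hrng : ∀ a, H.rng (π a) = G.rng a)
    (hmulπ : ∀ a b, G.src a = G.rng b → π (G.mul a b) = H.mul (π a) (π b))
    (hunitπ : ∀ x, π (G.unit x) = H.unit x)
    (hsurj : Function.Surjective π)
    (S : Set A) (hker : S = {a | π a = H.unit (G.src a)})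
    (hiso : ∀ a ∈ S, G.src a = G.rng a)
    (φ : A → T)
    (hφp : ∀ a ∈ S, Tb.p (φ a) = G.src a)
    (hφmul : ∀ a b, a ∈ S → b ∈ S → G.src a = G.src b →
      φ (G.mul a b) = Tb.mul (φ a) (φ b))
    (hφunit : ∀ x, φ (G.unit x) = Tb.one x)
    (hφequiv : ∀ γ s, s ∈ S → G.rng s = G.src γ →
      φ (G.mul (G.mul γ s) (G.inv γ)) = ac.act (π γ) (φ s)) :
    ∃ (TG : Gpd X {q : T × A // Tb.p q.1 = G.rng q.2})
      (i : {a : A // a ∈ S} → {q : T × A // Tb.p q.1 = G.rng q.2}),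
      (∀ q, TG.src q = G.src q.val.2) ∧
      (∀ q, TG.rng q = G.rng q.val.2) ∧
      (∀ x, (TG.unit x).val = (Tb.one x, G.unit x)) ∧
      (∀ q q', G.src q.val.2 = G.rng q'.val.2 →
        (TG.mul q q').val =
          (Tb.mul q.val.1 (ac.act (π q.val.2) q'.val.1),
            G.mul q.val.2 q'.val.2)) ∧
      (∀ q, (TG.inv q).val =
          (ac.act (H.inv (π q.val.2)) (Tb.inv q.val.1), G.inv q.val.2)) ∧
      (∀ s, (i s).val = (φ (G.inv s.val), s.val)) ∧
      Function.Injective i ∧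
      (∀ s s', G.src s.val = G.src s'.val →
        ∃ s'' : {a : A // a ∈ S}, s''.val = G.mul s.val s'.val ∧
          i s'' = TG.mul (i s) (i s')) ∧
      (∀ s, ∃ s' : {a : A // a ∈ S}, s'.val = G.inv s.val ∧
        i s' = TG.inv (i s)) ∧
      (∀ q w, (∃ s, i s = w) → TG.src w = TG.src q → TG.rng w = TG.src q →
        ∃ s', i s' = TG.mul (TG.mul q w) (TG.inv q)) :=
  stmt2_general G H Tb ac π hsrc hrng hmulπ hunitπ S hker φ hφp hφmul hφequiv
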